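/- Let Ṙ be the set of roots of an irreducible reduced simply laced finite (crystallographic) root system of rank at least 2, with root lattice Q̇ = ℤ-span of Ṙ, and let Λ be a free abelian group of finite rank. In the abelian group Q̇ ⊕ Λ, let R := ({0} ⊕ Λ) ∪ {α̇ + λ : α̇ ∈ Ṙ, λ ∈ Λ}, with isotropic roots R⁰ = {0} ⊕ Λ and non-isotropic roots R^× = Ṙ + Λ. Then every core-character of R is a character: if ψ : R → ℂˣ satisfies ψ(α + β) = ψ(α)ψ(β) whenever α ∈ R^×, β ∈ R and α + β ∈ R, then ψ(α + β) = ψ(α)ψ(β) for all α, β ∈ R with α + β ∈ R. -/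

import Mathlib

open scoped RealInnerProductSpace

theorem Set.Nonempty.of_span_eq_top {K V : Type*} [Semiring K] [AddCommMonoid V] [Module K V]
    [Nontrivial V] {s : Set V} (hs : Submodule.span K s = ⊤) : s.Nonempty := by
  rw [Set.nonempty_iff_ne_empty]
  rintro rfl
  exact bot_ne_top (Submodule.span_empty.symm.trans hs)

section Character

variable {G M : Type*} [AddCommMonoid G] [CancelCommMonoid M]

def IsCoreCharacter (R Rx : Set G) (ψ : G → M) : Prop :=
  ∀ α ∈ Rx, ∀ β ∈ R, α + β ∈ R → ψ (α + β) = ψ α * ψ β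

def IsCharacter (R : Set G) (ψ : G → M) : Prop :=
  ∀ α ∈ R, ∀ β ∈ R, α + β ∈ R → ψ (α + β) = ψ α * ψ β

/-- For isotropic `α`, `β` and any non-isotropic `δ`, expand `ψ (δ + α + β)` in two ways
and cancel `ψ δ`. -/
theorem IsCoreCharacter.isCharacter {R R0 Rx : Set G} {ψ : G → M}
    (hψ : IsCoreCharacter R Rx ψ) (hR : R = R0 ∪ Rx)
    (hadd : ∀ δ ∈ Rx, ∀ α ∈ R0, δ + α ∈ Rx) (hne : Rx.Nonempty) :
    IsCharacter R ψ := by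
  have hRx : Rx ⊆ R := hR ▸ Set.subset_union_right
  intro α hα β hβ hαβ
  rcases hR ▸ hα with hα0 | hαx
  · rcases hR ▸ hβ with hβ0 | hβx
    · obtain ⟨δ, hδ⟩ := hne
      have hδα : δ + α ∈ Rx := hadd δ hδ α hα0
      have hδαβ : δ + α + β ∈ Rx := hadd _ hδα β hβ0
      apply mul_left_cancel (a := ψ δ)
      calc ψ δ * ψ (α + β) = ψ (δ + α + β) := by
            rw [add_assoc, hψ δ hδ _ hαβ (add_assoc δ α β ▸ hRx hδαβ)]
        _ = ψ δ * (ψ α * ψ β) := by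
            rw [hψ _ hδα β hβ (hRx hδαβ), hψ δ hδ α hα (hRx hδα), mul_assoc]
    · rw [add_comm, mul_comm (ψ α)]
      exact hψ β hβx α hα (add_comm α β ▸ hαβ)
  · exact hψ α hαx β hβ hαβ

end Character

theorem stmt5_general (V : Type*) [NormedAddCommGroup V] [InnerProductSpace ℝ V]
    (Rdot : Set V) (hspan : Submodule.span ℝ Rdot = ⊤)
    (hrank : 2 ≤ Module.finrank ℝ V)
    (Λ : Type*) [AddCommGroup Λ]
    (R R0 Rx : Set (V × Λ))
    (hR0 : R0 = {p : V × Λ | p.1 = 0})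
    (hRx : Rx = {p : V × Λ | p.1 ∈ Rdot})
    (hRdef : R = R0 ∪ Rx)
    (ψ : V × Λ → ℂˣ)
    (hcore : ∀ α ∈ Rx, ∀ β ∈ R, α + β ∈ R → ψ (α + β) = ψ α * ψ β) :
    ∀ α ∈ R, ∀ β ∈ R, α + β ∈ R → ψ (α + β) = ψ α * ψ β := by
  have : Nontrivial V := Module.nontrivial_of_finrank_pos (R := ℝ) (by omega)
  obtain ⟨γ, hγ⟩ := Set.Nonempty.of_span_eq_top hspan
  refine IsCoreCharacter.isCharacter hcore hRdef ?_ ⟨(γ, 0), hRx ▸ hγ⟩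
  subst hR0 hRx
  rintro δ hδ α (hα : α.1 = 0)
  simpa [hα] using hδ

/-- Let `Ṙ` be an irreducible reduced simply laced finite crystallographic root
system of rank `≥ 2` and `Λ` a free abelian group of finite rank.  In `Q̇ ⊕ Λ` consider the
simply laced extended affine root system `R = ({0} ⊕ Λ) ∪ (Ṙ + Λ)` with isotropic roots
`R⁰ = {0} ⊕ Λ` and non-isotropic roots `R^× = Ṙ + Λ`.  Then every core-character of `R`
is a character. -/
theorem stmt5 (V : Type*) [NormedAddCommGroup V] [InnerProductSpace ℝ V]
    [FiniteDimensional ℝ V]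
    (Rdot : Set V) (hfin : Rdot.Finite) (hspan : Submodule.span ℝ Rdot = ⊤)
    (h0 : (0 : V) ∉ Rdot)
    (hrefl : ∀ α ∈ Rdot, ∀ β ∈ Rdot, β - (2 * ⟪β, α⟫ / ⟪α, α⟫) • α ∈ Rdot)
    (hcrys : ∀ α ∈ Rdot, ∀ β ∈ Rdot, ∃ n : ℤ, 2 * ⟪β, α⟫ / ⟪α, α⟫ = (n : ℝ))
    (hred : ∀ α ∈ Rdot, ∀ c : ℝ, c • α ∈ Rdot → c = 1 ∨ c = -1)
    (hirr : ∀ R1 R2 : Set V, R1 ∪ R2 = Rdot → R1.Nonempty → R2.Nonempty →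
      (∀ a ∈ R1, ∀ b ∈ R2, ⟪a, b⟫ = 0) → False)
    (hsl : ∀ α ∈ Rdot, ∀ β ∈ Rdot, ⟪α, α⟫ = ⟪β, β⟫)
    (hrank : 2 ≤ Module.finrank ℝ V)
    (Λ : Type*) [AddCommGroup Λ] [Module.Free ℤ Λ] [Module.Finite ℤ Λ]
    (R R0 Rx : Set (V × Λ))
    (hR0 : R0 = {p : V × Λ | p.1 = 0})
    (hRx : Rx = {p : V × Λ | p.1 ∈ Rdot})
    (hRdef : R = R0 ∪ Rx)
    (ψ : V × Λ → ℂˣ)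
    (hcore : ∀ α ∈ Rx, ∀ β ∈ R, α + β ∈ R → ψ (α + β) = ψ α * ψ β) :
    ∀ α ∈ R, ∀ β ∈ R, α + β ∈ R → ψ (α + β) = ψ α * ψ β :=
  stmt5_general V Rdot hspan hrank Λ R R0 Rx hR0 hRx hRdef ψ hcore
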